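/- (Pointwise Gaussian approximation in the low-regularity regime; inequality (eq:estm5) in the proof of Theorem 4.2.) Let m ≥ 1, let α ∈ (0,1], and let φ : ℝ^{2m} → ℂ be an admissible characteristic function with covariance data ν_1,…,ν_m ≥ 1 which is twice continuously differentiable on the closed ball B̄(0,ε₀) for some ε₀ > 0 with every second-order partial derivative α-Hölder continuous on B̄(0,ε₀). Then there exist ε ∈ (0,ε₀] and a constant C > 0 such that for every integer n ≥ 1 and every z ∈ ℝ^{2m} with ‖z‖ ≤ √n·ε, |φ(z/√n)^n − G_ν(z)| ≤ C·‖z‖^{2+α}·n^{−α/2}·e^{−‖z‖²/4}. -/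

import Mathlib

open MeasureTheory Filter Asymptotics Metric

noncomputable section

/-- The quadratic form `Σ_j ν_j (x_j² + y_j²)` on `ℝ^{2m} ≃ ℝ^m × ℝ^m`,
identifying `ℂ^m` with `ℝ^{2m}` via `z = (x, y)`. -/
def quadForm (m : ℕ) (ν : Fin m → ℝ) (z : EuclideanSpace ℝ (Fin m ⊕ Fin m)) : ℝ :=
  ∑ j : Fin m, ν j * ((z (Sum.inl j)) ^ 2 + (z (Sum.inr j)) ^ 2)

/-- The Gaussian limit `G_ν(z) = exp(−(1/2)·Σ_j ν_j(x_j² + y_j²))`. -/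
def gaussLimit (m : ℕ) (ν : Fin m → ℝ) (z : EuclideanSpace ℝ (Fin m ⊕ Fin m)) : ℝ :=
  Real.exp (-(1 / 2) * quadForm m ν z)

/-- `φ` is an admissible characteristic function with covariance data `ν`:
(i) continuous with `φ(0) = 1`; (ii) square-integrable; (iii) uniformly bounded away
from `1` in modulus outside any neighbourhood of the origin; (iv) with the quadratic
expansion `φ(z) = 1 − (1/2)·Σ_j ν_j(x_j² + y_j²) + o(‖z‖²)` at the origin. -/
structure IsAdmissibleCF (m : ℕ) (ν : Fin m → ℝ)
    (φ : EuclideanSpace ℝ (Fin m ⊕ Fin m) → ℂ) : Prop where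
  continuous : Continuous φ
  map_zero : φ 0 = 1
  sq_integrable : MemLp φ 2 (volume : Measure (EuclideanSpace ℝ (Fin m ⊕ Fin m)))
  strict_nonlattice : ∀ ε : ℝ, 0 < ε → ∃ η : ℝ, η < 1 ∧ ∀ z, ε ≤ ‖z‖ → ‖φ z‖ ≤ η
  quad_expansion :
    (fun z => φ z - ((1 - (1 / 2) * quadForm m ν z : ℝ) : ℂ))
      =o[nhds (0 : EuclideanSpace ℝ (Fin m ⊕ Fin m))] fun z => ‖z‖ ^ 2

/-!
Hölder continuity of `D²φ` on the ball gives the Taylor estimate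
`φ w = φ 0 + Dφ(0) w + ½ D²φ(0)[w, w] + O(‖w‖^{2+α})`. Since the remainder is `o(‖w‖²)`,
comparing with the expansion (iv) along rays `t ↦ t • w` identifies this Taylor polynomial with
`1 − Q(w)/2`, where `Q = quadForm m ν`. For small `w` this yields
`|φ w − e^{−Q(w)/2}| ≲ ‖w‖^{2+α}` and `|φ w| ≤ e^{−Q(w)/4}`. Now put `w = z/√n`: the Gaussian
factors as `G_ν(z) = (e^{−Q(w)/2})ⁿ`, and `|aⁿ − bⁿ| ≤ n M^{n−1} |a − b|` with `M = e^{−Q(w)/4}`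
gives the claim, because `n ‖w‖^{2+α} = ‖z‖^{2+α} n^{−α/2}` and
`M^{n−1} = e^{−Q(z)/4} e^{Q(w)/4} ≤ e^{1/2} e^{−‖z‖²/4}` as `Q ≥ ‖·‖²`.
-/

open Set Topology

theorem norm_pow_succ_sub_pow_succ_le {R : Type*} [SeminormedRing R] [NormOneClass R]
    {a b : R} {M : ℝ} (ha : ‖a‖ ≤ M) (hb : ‖b‖ ≤ M) (n : ℕ) :
    ‖a ^ (n + 1) - b ^ (n + 1)‖ ≤ (n + 1) * M ^ n * ‖a - b‖ := by
  have hM : 0 ≤ M := (norm_nonneg a).trans ha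
  induction n with
  | zero => simp
  | succ n ih =>
    have hsplit : a ^ (n + 2) - b ^ (n + 2)
        = a * (a ^ (n + 1) - b ^ (n + 1)) + (a - b) * b ^ (n + 1) := by
      rw [pow_succ' a, pow_succ' b, mul_sub, sub_mul]
      abel
    calc ‖a ^ (n + 2) - b ^ (n + 2)‖
        ≤ ‖a‖ * ‖a ^ (n + 1) - b ^ (n + 1)‖ + ‖a - b‖ * ‖b‖ ^ (n + 1) := by
          rw [hsplit]
          refine (norm_add_le _ _).trans (add_le_add (norm_mul_le _ _) ?_)
          exact (norm_mul_le _ _).trans (by gcongr; exact norm_pow_le _ _)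
      _ ≤ M * ((n + 1) * M ^ n * ‖a - b‖) + ‖a - b‖ * M ^ (n + 1) := by gcongr
      _ = (↑(n + 1) + 1) * M ^ (n + 1) * ‖a - b‖ := by push_cast; ring

section Analysis

variable {E F : Type*} [NormedAddCommGroup E] [NormedSpace ℝ E]
  [NormedAddCommGroup F] [NormedSpace ℝ F]

theorem eq_zero_of_smul_isLittleO {α : Type*} {l : Filter α} [l.NeBot] {g : α → ℝ} {b : F}
    (hg : ∀ᶠ x in l, g x ≠ 0) (h : (fun x => g x • b) =o[l] g) : b = 0 := by
  by_contra hb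
  obtain ⟨x, hx, hgx⟩ := ((h.def (half_pos (norm_pos_iff.2 hb))).and hg).exists
  rw [norm_smul] at hx
  nlinarith [norm_pos_iff.2 hgx, norm_pos_iff.2 hb]

theorem eq_zero_of_smul_add_sq_smul_isLittleO {a b : F}
    (h : (fun t : ℝ => t • a + t ^ 2 • b) =o[𝓝[≠] 0] fun t => t ^ 2) : a = 0 ∧ b = 0 := by
  have hsq : (fun t : ℝ => t ^ 2) =o[𝓝[≠] 0] fun t => t :=
    (isLittleO_pow_id one_lt_two).mono nhdsWithin_le_nhds
  have hne : ∀ᶠ t : ℝ in 𝓝[≠] 0, t ≠ 0 := self_mem_nhdsWithin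
  have hbO : (fun t : ℝ => t ^ 2 • b) =O[𝓝[≠] 0] fun t => t ^ 2 :=
    .of_bound ‖b‖ (.of_forall fun t => by rw [norm_smul, mul_comm])
  have ha : (fun t : ℝ => t • a) =o[𝓝[≠] 0] fun t => t := by
    simpa using (h.trans hsq).sub (hbO.trans_isLittleO hsq)
  obtain rfl := eq_zero_of_smul_isLittleO hne ha
  simp only [smul_zero, zero_add] at h
  exact ⟨rfl, eq_zero_of_smul_isLittleO (hne.mono fun t ht => pow_ne_zero 2 ht) h⟩

theorem eq_zero_of_add_isLittleO_norm_sq {ℓ q : E → F} (hℓ : ∀ (t : ℝ) w, ℓ (t • w) = t • ℓ w)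
    (hq : ∀ (t : ℝ) w, q (t • w) = t ^ 2 • q w)
    (h : (fun w => ℓ w + q w) =o[𝓝 0] fun w => ‖w‖ ^ 2) (w : E) : ℓ w = 0 ∧ q w = 0 := by
  have hray : Tendsto (fun t : ℝ => t • w) (𝓝[≠] 0) (𝓝 0) :=
    ((continuous_id.smul continuous_const).tendsto' (0 : ℝ) 0 (zero_smul ℝ w)).mono_left
      nhdsWithin_le_nhds
  have hO : (fun t : ℝ => ‖t • w‖ ^ 2) =O[𝓝[≠] 0] fun t => t ^ 2 :=
    .of_bound (‖w‖ ^ 2) (.of_forall fun t => by simp [norm_smul, mul_pow, mul_comm])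
  apply eq_zero_of_smul_add_sq_smul_isLittleO
  simpa only [Function.comp_def, hℓ, hq] using (h.comp_tendsto hray).trans_isBigO hO

theorem norm_sub_taylor_two_le_of_hasDerivAt {g g' g'' : ℝ → F} {C : ℝ}
    (hg : ∀ t ∈ Icc (0 : ℝ) 1, HasDerivAt g (g' t) t)
    (hg' : ∀ t ∈ Icc (0 : ℝ) 1, HasDerivAt g' (g'' t) t)
    (hC : ∀ t ∈ Icc (0 : ℝ) 1, ‖g'' t - g'' 0‖ ≤ C) :
    ‖g 1 - (g 0 + g' 0 + (1 / 2 : ℝ) • g'' 0)‖ ≤ C := by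
  have hderiv : ∀ t ∈ Icc (0 : ℝ) 1, ‖g' t - g' 0 - t • g'' 0‖ ≤ C := by
    intro t ht
    have h := norm_image_sub_le_of_norm_deriv_le_segment' (f := fun s => g' s - s • g'' 0)
      (fun s hs => ((hg' s hs).sub ((hasDerivAt_id s).smul_const (g'' 0))).hasDerivWithinAt)
      (fun s hs => by simpa using hC s (Ico_subset_Icc_self hs)) t ht
    have hC0 : 0 ≤ C := by simpa using hC 0 (left_mem_Icc.2 zero_le_one)
    rw [zero_smul, sub_zero, sub_zero, sub_right_comm] at h
    nlinarith [ht.2]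
  have h := norm_image_sub_le_of_norm_deriv_le_segment_01'
    (f := fun s => g s - s • g' 0 - (s ^ 2 / 2) • g'' 0)
    (fun s hs => (((hg s hs).sub ((hasDerivAt_id s).smul_const _)).sub
      (((hasDerivAt_pow 2 s).div_const 2).smul_const _)).hasDerivWithinAt)
    (fun s hs => by simpa using hderiv s (Ico_subset_Icc_self hs))
  convert h using 2
  simp only [one_smul, one_pow, zero_smul, sub_zero, zero_pow two_ne_zero, zero_div]
  module

theorem norm_sub_taylor_two_le_of_holder {f : E → F} {r K α : ℝ}
    (hf : ContDiffOn ℝ 2 f (ball 0 r)) (hα : 0 ≤ α)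
    (hK : ∀ x ∈ ball (0 : E) r,
      ‖iteratedFDeriv ℝ 2 f x - iteratedFDeriv ℝ 2 f 0‖ ≤ K * ‖x‖ ^ α)
    {w : E} (hw : w ∈ ball 0 r) :
    ‖f w - (f 0 + fderiv ℝ f 0 w + (1 / 2 : ℝ) • iteratedFDeriv ℝ 2 f 0 ![w, w])‖
      ≤ K * ‖w‖ ^ α * ‖w‖ ^ 2 := by
  have hseg : ∀ t ∈ Icc (0 : ℝ) 1, t • w ∈ ball (0 : E) r := fun t ht =>
    (convex_ball 0 r).smul_mem_of_zero_mem (mem_ball_self (pos_of_mem_ball hw)) hw ht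
  have hCD : ∀ t ∈ Icc (0 : ℝ) 1, ContDiffAt ℝ 2 f (t • w) := fun t ht =>
    hf.contDiffAt (isOpen_ball.mem_nhds (hseg t ht))
  have hline : ∀ t : ℝ, HasDerivAt (fun s : ℝ => s • w) w t := fun t => by
    simpa using (hasDerivAt_id t).smul_const w
  -- `K` itself may be negative; only `K * ‖w‖ ^ α ≥ 0` is needed to compare `t • w` with `w`.
  have hK₀ : 0 ≤ K * ‖w‖ ^ α := (norm_nonneg _).trans (hK w hw)
  have h := norm_sub_taylor_two_le_of_hasDerivAt (C := K * ‖w‖ ^ α * ‖w‖ ^ 2)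
    (g := fun t => f (t • w)) (g' := fun t => fderiv ℝ f (t • w) w)
    (g'' := fun t => iteratedFDeriv ℝ 2 f (t • w) ![w, w]) ?_ ?_ ?_
  · simpa using h
  · intro t ht
    exact ((hCD t ht).differentiableAt two_ne_zero).hasFDerivAt.comp_hasDerivAt t (hline t)
  · intro t ht
    have hD : HasFDerivAt (fderiv ℝ f) (fderiv ℝ (fderiv ℝ f) (t • w)) (t • w) :=
      (((hCD t ht).fderiv_right (by norm_num)).differentiableAt one_ne_zero).hasFDerivAt
    have hcomp : HasDerivAt (fun s : ℝ => fderiv ℝ f (s • w))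
        (fderiv ℝ (fderiv ℝ f) (t • w) w) t := hD.comp_hasDerivAt t (hline t)
    have h := hcomp.clm_apply (hasDerivAt_const t w)
    rw [map_zero, add_zero] at h
    simpa only [iteratedFDeriv_two_apply, Matrix.cons_val_zero, Matrix.cons_val_one] using h
  · intro t ht
    calc ‖iteratedFDeriv ℝ 2 f (t • w) ![w, w] - iteratedFDeriv ℝ 2 f ((0 : ℝ) • w) ![w, w]‖
        ≤ ‖iteratedFDeriv ℝ 2 f (t • w) - iteratedFDeriv ℝ 2 f 0‖ * (‖w‖ * ‖w‖) := by
          simpa [Fin.prod_univ_two] using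
            (iteratedFDeriv ℝ 2 f (t • w) - iteratedFDeriv ℝ 2 f 0).le_opNorm ![w, w]
      _ ≤ K * ‖t • w‖ ^ α * ‖w‖ ^ 2 := by
          rw [← sq]
          gcongr
          exact hK _ (hseg t ht)
      _ = t ^ α * (K * ‖w‖ ^ α) * ‖w‖ ^ 2 := by
          rw [norm_smul, Real.norm_of_nonneg ht.1, Real.mul_rpow ht.1 (norm_nonneg w)]
          ring
      _ ≤ K * ‖w‖ ^ α * ‖w‖ ^ 2 :=
          mul_le_mul_of_nonneg_right (mul_le_of_le_one_left hK₀ (Real.rpow_le_one ht.1 ht.2 hα))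
            (by positivity)

theorem iteratedFDerivWithin_closedBall_eq {f : E → F} {n : ℕ} {c x : E} {r : ℝ}
    (hx : x ∈ ball c r) :
    iteratedFDerivWithin ℝ n f (closedBall c r) x = iteratedFDeriv ℝ n f x := by
  rw [← iteratedFDerivWithin_univ]
  exact iteratedFDerivWithin_congr_set (eventuallyEq_univ.2 (closedBall_mem_nhds_of_mem hx)) n

end Analysis

theorem norm_sub_exp_neg_le {a : ℂ} {x δ : ℝ} (hx : |x| ≤ 1) (ha : ‖a - (1 - x : ℝ)‖ ≤ δ) :
    ‖a - Real.exp (-x)‖ ≤ δ + x ^ 2 := by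
  have hexp : |(1 - x) - Real.exp (-x)| ≤ x ^ 2 := by
    rw [abs_sub_comm, ← neg_sq, show Real.exp (-x) - (1 - x) = Real.exp (-x) - 1 - -x by ring]
    exact Real.abs_exp_sub_one_sub_id_le (by rwa [abs_neg])
  calc ‖a - Real.exp (-x)‖ ≤ ‖a - (1 - x : ℝ)‖ + ‖((1 - x : ℝ) : ℂ) - Real.exp (-x)‖ :=
        norm_sub_le_norm_sub_add_norm_sub _ _ _
    _ ≤ δ + x ^ 2 := by
        rw [← Complex.ofReal_sub, Complex.norm_real, Real.norm_eq_abs]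
        exact add_le_add ha hexp

theorem norm_le_exp_neg_half {a : ℂ} {x : ℝ} (hx : x ≤ 1) (ha : ‖a - (1 - x : ℝ)‖ ≤ x / 2) :
    ‖a‖ ≤ Real.exp (-(x / 2)) := by
  have hx₀ : 0 ≤ x := by linarith [(norm_nonneg _).trans ha]
  calc ‖a‖ ≤ ‖((1 - x : ℝ) : ℂ)‖ + ‖a - (1 - x : ℝ)‖ := norm_le_norm_add_norm_sub' _ _
    _ ≤ (1 - x) + x / 2 := by
        rw [Complex.norm_real, Real.norm_of_nonneg (by linarith)]
        linarith
    _ = -(x / 2) + 1 := by ring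
    _ ≤ Real.exp (-(x / 2)) := Real.add_one_le_exp _

section GaussianApproximation

variable {m : ℕ} {ν : Fin m → ℝ} {φ : EuclideanSpace ℝ (Fin m ⊕ Fin m) → ℂ}

theorem norm_sq_le_quadForm (hν : ∀ j, 1 ≤ ν j) (z : EuclideanSpace ℝ (Fin m ⊕ Fin m)) :
    ‖z‖ ^ 2 ≤ quadForm m ν z := by
  rw [EuclideanSpace.real_norm_sq_eq, Fintype.sum_sum_type, quadForm, ← Finset.sum_add_distrib]
  refine Finset.sum_le_sum fun j _ => ?_
  nlinarith [hν j, sq_nonneg (z (Sum.inl j)), sq_nonneg (z (Sum.inr j))]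

theorem quadForm_le_sum_mul_norm_sq (hν : ∀ j, 0 ≤ ν j) (z : EuclideanSpace ℝ (Fin m ⊕ Fin m)) :
    quadForm m ν z ≤ (∑ j, ν j) * ‖z‖ ^ 2 := by
  rw [EuclideanSpace.real_norm_sq_eq, Fintype.sum_sum_type, quadForm, ← Finset.sum_add_distrib,
    Finset.mul_sum]
  refine Finset.sum_le_sum fun j _ => ?_
  have hj : ν j ≤ ∑ i, ν i := Finset.single_le_sum (fun i _ => hν i) (Finset.mem_univ j)
  nlinarith [sq_nonneg (z (Sum.inl j)), sq_nonneg (z (Sum.inr j))]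

theorem quadForm_smul (c : ℝ) (z : EuclideanSpace ℝ (Fin m ⊕ Fin m)) :
    quadForm m ν (c • z) = c ^ 2 * quadForm m ν z := by
  simp only [quadForm, PiLp.smul_apply, smul_eq_mul, Finset.mul_sum]
  exact Finset.sum_congr rfl fun j _ => by ring

theorem continuous_quadForm : Continuous (quadForm m ν) := by
  unfold quadForm
  fun_prop

theorem gaussLimit_inv_sqrt_smul_pow {n : ℕ} (hn : n ≠ 0) (z : EuclideanSpace ℝ (Fin m ⊕ Fin m)) :
    gaussLimit m ν ((√n)⁻¹ • z) ^ n = gaussLimit m ν z := by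
  have hn' : (n : ℝ) ≠ 0 := Nat.cast_ne_zero.2 hn
  rw [gaussLimit, gaussLimit, ← Real.exp_nat_mul, quadForm_smul, inv_pow,
    Real.sq_sqrt (Nat.cast_nonneg n)]
  field_simp

theorem taylor_two_eq_one_sub_half_quadForm (hφ₀ : φ 0 = 1)
    (hquad : (fun z => φ z - ((1 - (1 / 2) * quadForm m ν z : ℝ) : ℂ))
      =o[𝓝 0] fun z => ‖z‖ ^ 2)
    (htaylor : (fun z => φ z - (φ 0 + fderiv ℝ φ 0 z
      + (1 / 2 : ℝ) • iteratedFDeriv ℝ 2 φ 0 ![z, z])) =o[𝓝 0] fun z => ‖z‖ ^ 2)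
    (w : EuclideanSpace ℝ (Fin m ⊕ Fin m)) :
    φ 0 + fderiv ℝ φ 0 w + (1 / 2 : ℝ) • iteratedFDeriv ℝ 2 φ 0 ![w, w]
      = ((1 - (1 / 2) * quadForm m ν w : ℝ) : ℂ) := by
  set q : EuclideanSpace ℝ (Fin m ⊕ Fin m) → ℂ := fun z =>
    (1 / 2 : ℝ) • (iteratedFDeriv ℝ 2 φ 0 ![z, z] + (quadForm m ν z : ℂ))
  have hq : ∀ (t : ℝ) z, q (t • z) = t ^ 2 • q z := fun t z => by
    simp only [q, iteratedFDeriv_two_apply, Matrix.cons_val_zero, Matrix.cons_val_one, map_smul,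
      FunLike.coe_smul, Pi.smul_apply, quadForm_smul, Complex.real_smul]
    push_cast
    ring
  have hsum := eq_zero_of_add_isLittleO_norm_sq (fderiv ℝ φ 0).map_smul hq
    ((hquad.sub htaylor).congr_left fun z => by
      simp only [q, hφ₀, Complex.real_smul]
      push_cast
      ring) w
  rw [hφ₀, hsum.1]
  have := hsum.2
  simp only [q, Complex.real_smul] at this ⊢
  push_cast at this ⊢
  linear_combination this

theorem norm_sub_one_sub_half_quadForm_le (hφ₀ : φ 0 = 1)
    (hquad : (fun z => φ z - ((1 - (1 / 2) * quadForm m ν z : ℝ) : ℂ))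
      =o[𝓝 0] fun z => ‖z‖ ^ 2)
    {r K α : ℝ} (hφ : ContDiffOn ℝ 2 φ (ball 0 r)) (hα : 0 < α)
    (hK : ∀ x ∈ ball (0 : EuclideanSpace ℝ (Fin m ⊕ Fin m)) r,
      ‖iteratedFDeriv ℝ 2 φ x - iteratedFDeriv ℝ 2 φ 0‖ ≤ K * ‖x‖ ^ α)
    {w : EuclideanSpace ℝ (Fin m ⊕ Fin m)} (hw : w ∈ ball 0 r) :
    ‖φ w - ((1 - (1 / 2) * quadForm m ν w : ℝ) : ℂ)‖ ≤ K * ‖w‖ ^ α * ‖w‖ ^ 2 := by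
  have hbound := fun z (hz : z ∈ ball 0 r) => norm_sub_taylor_two_le_of_holder hφ hα.le hK hz
  have hsmall : (fun z : EuclideanSpace ℝ (Fin m ⊕ Fin m) => ‖z‖ ^ α * ‖z‖ ^ 2)
      =o[𝓝 0] fun z => ‖z‖ ^ 2 := by
    have h₀ : Tendsto (fun z : EuclideanSpace ℝ (Fin m ⊕ Fin m) => ‖z‖ ^ α) (𝓝 0) (𝓝 0) :=
      (continuous_norm.rpow_const fun _ => Or.inr hα.le).tendsto' 0 0
        (by simp [Real.zero_rpow hα.ne'])
    simpa using ((isLittleO_one_iff ℝ).2 h₀).mul_isBigO (isBigO_refl (fun z => ‖z‖ ^ 2) _)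
  have htaylor : (fun z => φ z - (φ 0 + fderiv ℝ φ 0 z
      + (1 / 2 : ℝ) • iteratedFDeriv ℝ 2 φ 0 ![z, z])) =o[𝓝 0] fun z => ‖z‖ ^ 2 := by
    refine (IsBigO.of_bound |K| ?_).trans_isLittleO hsmall
    filter_upwards [isOpen_ball.mem_nhds (mem_ball_self (pos_of_mem_ball hw))] with z hz
    rw [Real.norm_of_nonneg (by positivity), ← mul_assoc]
    exact (hbound z hz).trans (by gcongr; exact le_abs_self K)
  rw [← taylor_two_eq_one_sub_half_quadForm hφ₀ hquad htaylor w]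
  exact hbound w hw

theorem exists_eventually_norm_sub_gaussLimit_le (hν : ∀ j, 1 ≤ ν j) {K α : ℝ} (hα₀ : 0 < α)
    (hα₂ : α ≤ 2)
    (hφ : ∀ᶠ w in 𝓝 0, ‖φ w - ((1 - (1 / 2) * quadForm m ν w : ℝ) : ℂ)‖ ≤ K * ‖w‖ ^ α * ‖w‖ ^ 2) :
    ∃ C > 0, ∀ᶠ w in 𝓝 0, quadForm m ν w ≤ 2 ∧ ‖φ w‖ ≤ Real.exp (-(quadForm m ν w / 4)) ∧
      ‖φ w - gaussLimit m ν w‖ ≤ C * ‖w‖ ^ α * ‖w‖ ^ 2 := by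
  set N := ∑ j, ν j
  refine ⟨|K| + N ^ 2 + 1, by positivity, ?_⟩
  have hQ : ∀ᶠ w in 𝓝 0, quadForm m ν w ≤ 2 :=
    (continuous_quadForm.tendsto' 0 0 (by simp [quadForm])).eventually_le_const (by norm_num)
  have hnorm : ∀ᶠ w in 𝓝 (0 : EuclideanSpace ℝ (Fin m ⊕ Fin m)), ‖w‖ ≤ 1 :=
    tendsto_norm_zero.eventually_le_const one_pos
  have hK : ∀ᶠ w in 𝓝 (0 : EuclideanSpace ℝ (Fin m ⊕ Fin m)), K * ‖w‖ ^ α ≤ 1 / 4 :=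
    (((continuous_norm.rpow_const fun _ => Or.inr hα₀.le).const_mul K).tendsto' 0 0
      (by simp [Real.zero_rpow hα₀.ne'])).eventually_le_const (by norm_num)
  filter_upwards [hφ, hQ, hnorm, hK] with w hw hQw hw₁ hKw
  have hQ₀ : ‖w‖ ^ 2 ≤ quadForm m ν w := norm_sq_le_quadForm hν w
  have hQN : quadForm m ν w ≤ N * ‖w‖ ^ 2 :=
    quadForm_le_sum_mul_norm_sq (fun j => zero_le_one.trans (hν j)) w
  have hsq : ‖w‖ ^ 2 ≤ ‖w‖ ^ α := by
    simpa using Real.rpow_le_rpow_of_exponent_ge' (norm_nonneg w) hw₁ hα₀.le hα₂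
  have hw' : ‖φ w - ((1 - quadForm m ν w / 2 : ℝ) : ℂ)‖ ≤ K * ‖w‖ ^ α * ‖w‖ ^ 2 := by
    convert hw using 5
    ring
  refine ⟨hQw, ?_, ?_⟩
  · have h := norm_le_exp_neg_half (by linarith) (hw'.trans (by nlinarith [sq_nonneg ‖w‖]))
    convert h using 3
    ring
  · have h := norm_sub_exp_neg_le (abs_le.2 ⟨by linarith [sq_nonneg ‖w‖], by linarith⟩) hw'
    rw [gaussLimit, show -(1 / 2) * quadForm m ν w = -(quadForm m ν w / 2) by ring]
    have hQsq : (quadForm m ν w / 2) ^ 2 ≤ N ^ 2 * ‖w‖ ^ α * ‖w‖ ^ 2 :=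
      calc (quadForm m ν w / 2) ^ 2 ≤ (N * ‖w‖ ^ 2) ^ 2 := by
            gcongr <;> linarith [sq_nonneg ‖w‖]
        _ = N ^ 2 * (‖w‖ ^ 2 * ‖w‖ ^ 2) := by ring
        _ ≤ N ^ 2 * (‖w‖ ^ α * ‖w‖ ^ 2) := by gcongr
        _ = N ^ 2 * ‖w‖ ^ α * ‖w‖ ^ 2 := by ring
    calc _ ≤ K * ‖w‖ ^ α * ‖w‖ ^ 2 + (quadForm m ν w / 2) ^ 2 := h
      _ ≤ |K| * ‖w‖ ^ α * ‖w‖ ^ 2 + N ^ 2 * ‖w‖ ^ α * ‖w‖ ^ 2 := by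
          gcongr
          exact le_abs_self K
      _ ≤ (|K| + N ^ 2 + 1) * ‖w‖ ^ α * ‖w‖ ^ 2 := by
          nlinarith [mul_nonneg (Real.rpow_nonneg (norm_nonneg w) α) (sq_nonneg ‖w‖)]

theorem norm_pow_sub_gaussLimit_le (hν : ∀ j, 1 ≤ ν j) {a : ℂ} {C α : ℝ} (hα : 0 ≤ α) {n : ℕ}
    (hn : n ≠ 0) {z : EuclideanSpace ℝ (Fin m ⊕ Fin m)}
    (hQ : quadForm m ν ((√n)⁻¹ • z) ≤ 2)
    (ha : ‖a‖ ≤ Real.exp (-(quadForm m ν ((√n)⁻¹ • z) / 4)))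
    (hab : ‖a - gaussLimit m ν ((√n)⁻¹ • z)‖
      ≤ C * ‖(√n)⁻¹ • z‖ ^ α * ‖(√n)⁻¹ • z‖ ^ 2) :
    ‖a ^ n - gaussLimit m ν z‖
      ≤ C * Real.exp (1 / 2) * ‖z‖ ^ (2 + α) * (n : ℝ) ^ (-(α / 2)) * Real.exp (-‖z‖ ^ 2 / 4) := by
  set w := (√n)⁻¹ • z with hw
  have hn₀ : (0 : ℝ) < n := Nat.cast_pos.2 (Nat.pos_of_ne_zero hn)
  have hQw : quadForm m ν w = quadForm m ν z / n := by
    rw [hw, quadForm_smul, inv_pow, Real.sq_sqrt hn₀.le, inv_mul_eq_div]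
  have hb : ‖(gaussLimit m ν w : ℂ)‖ ≤ Real.exp (-(quadForm m ν w / 4)) := by
    rw [Complex.norm_real, gaussLimit, Real.norm_of_nonneg (Real.exp_pos _).le]
    exact Real.exp_le_exp.2 (by linarith [(sq_nonneg ‖w‖).trans (norm_sq_le_quadForm hν w)])
  obtain ⟨k, rfl⟩ := Nat.exists_eq_succ_of_ne_zero hn
  have hpow := norm_pow_succ_sub_pow_succ_le ha hb k
  rw [← Complex.ofReal_pow, gaussLimit_inv_sqrt_smul_pow hn] at hpow
  have hexp :
      Real.exp (-(quadForm m ν w / 4)) ^ k ≤ Real.exp (1 / 2) * Real.exp (-‖z‖ ^ 2 / 4) := by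
    rw [← Real.exp_nat_mul, ← Real.exp_add]
    have hk : (k : ℝ) * -(quadForm m ν w / 4) = quadForm m ν w / 4 - quadForm m ν z / 4 := by
      rw [hQw]
      field_simp
      push_cast
      ring
    rw [hk]
    exact Real.exp_le_exp.2 (by linarith [norm_sq_le_quadForm hν z])
  have hscale : ((k + 1 : ℕ) : ℝ) * (‖w‖ ^ α * ‖w‖ ^ 2)
      = ‖z‖ ^ (2 + α) * ((k + 1 : ℕ) : ℝ) ^ (-(α / 2)) := by
    rw [hw, norm_smul, norm_inv, Real.norm_of_nonneg (Real.sqrt_nonneg _),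
      Real.mul_rpow (by positivity) (norm_nonneg z), Real.inv_rpow (Real.sqrt_nonneg _),
      Real.sqrt_eq_rpow, ← Real.rpow_mul hn₀.le, Real.rpow_neg hn₀.le,
      Real.rpow_add' (norm_nonneg z) (by positivity), mul_pow, inv_pow, ← Real.sqrt_eq_rpow,
      Real.sq_sqrt hn₀.le, Real.rpow_two]
    field_simp
  calc ‖a ^ (k + 1) - gaussLimit m ν z‖
      ≤ (k + 1) * Real.exp (-(quadForm m ν w / 4)) ^ k * ‖a - gaussLimit m ν w‖ := hpow
    _ ≤ (k + 1) * (Real.exp (1 / 2) * Real.exp (-‖z‖ ^ 2 / 4)) * (C * ‖w‖ ^ α * ‖w‖ ^ 2) := by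
        gcongr
    _ = C * Real.exp (1 / 2) * (((k + 1 : ℕ) : ℝ) * (‖w‖ ^ α * ‖w‖ ^ 2))
          * Real.exp (-‖z‖ ^ 2 / 4) := by
        push_cast
        ring
    _ = _ := by rw [hscale]; ring

end GaussianApproximation

theorem pointwise_gaussian_approx_low_regularity_general
    (m : ℕ) (α : ℝ) (hα₀ : 0 < α) (hα₁ : α ≤ 1)
    (ν : Fin m → ℝ) (hν : ∀ j, 1 ≤ ν j)
    (φ : EuclideanSpace ℝ (Fin m ⊕ Fin m) → ℂ)
    (hφ : IsAdmissibleCF m ν φ)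
    (ε₀ : ℝ) (hε₀ : 0 < ε₀)
    (hreg : ContDiffOn ℝ 2 φ (closedBall 0 ε₀))
    (hHolder : ∃ K : ℝ, ∀ z ∈ closedBall (0 : EuclideanSpace ℝ (Fin m ⊕ Fin m)) ε₀,
      ∀ w ∈ closedBall (0 : EuclideanSpace ℝ (Fin m ⊕ Fin m)) ε₀,
        ‖iteratedFDerivWithin ℝ 2 φ (closedBall 0 ε₀) z
          - iteratedFDerivWithin ℝ 2 φ (closedBall 0 ε₀) w‖ ≤ K * ‖z - w‖ ^ α) :
    ∃ ε : ℝ, 0 < ε ∧ ε ≤ ε₀ ∧ ∃ C : ℝ, 0 < C ∧ ∀ n : ℕ, 1 ≤ n →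
      ∀ z : EuclideanSpace ℝ (Fin m ⊕ Fin m), ‖z‖ ≤ Real.sqrt n * ε →
        ‖φ ((Real.sqrt n)⁻¹ • z) ^ n - (gaussLimit m ν z : ℂ)‖
          ≤ C * ‖z‖ ^ (2 + α) * (n : ℝ) ^ (-(α / 2)) * Real.exp (-‖z‖ ^ 2 / 4) := by
  obtain ⟨K, hK⟩ := hHolder
  have hHolder₀ : ∀ x ∈ ball (0 : EuclideanSpace ℝ (Fin m ⊕ Fin m)) ε₀,
      ‖iteratedFDeriv ℝ 2 φ x - iteratedFDeriv ℝ 2 φ 0‖ ≤ K * ‖x‖ ^ α := fun x hx => by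
    simpa [iteratedFDerivWithin_closedBall_eq hx,
      iteratedFDerivWithin_closedBall_eq (mem_ball_self hε₀)] using
      hK x (ball_subset_closedBall hx) 0 (mem_closedBall_self hε₀.le)
  obtain ⟨C, hC, hstep⟩ := exists_eventually_norm_sub_gaussLimit_le hν hα₀ (by linarith)
    (eventually_of_mem (ball_mem_nhds 0 hε₀) fun w hw =>
      norm_sub_one_sub_half_quadForm_le hφ.map_zero hφ.quad_expansion
        (hreg.mono ball_subset_closedBall) hα₀ hHolder₀ hw)
  obtain ⟨ε, hε, hεstep⟩ := nhds_basis_closedBall.eventually_iff.1 hstep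
  refine ⟨min ε ε₀, lt_min hε hε₀, min_le_right _ _, C * Real.exp (1 / 2), by positivity,
    fun n hn z hz => ?_⟩
  have hsqrt : 0 < Real.sqrt n := Real.sqrt_pos.2 (Nat.cast_pos.2 hn)
  have hw : (Real.sqrt n)⁻¹ • z ∈ closedBall 0 ε := by
    rw [mem_closedBall_zero_iff, norm_smul, norm_inv, Real.norm_of_nonneg hsqrt.le,
      inv_mul_le_iff₀ hsqrt]
    exact hz.trans (mul_le_mul_of_nonneg_left (min_le_left _ _) hsqrt.le)
  obtain ⟨hQ, ha, hab⟩ := hεstep hw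
  exact norm_pow_sub_gaussLimit_le hν hα₀.le (by omega) hQ ha hab

/-- Pointwise Gaussian approximation in the low-regularity regime (inequality
(eq:estm5) in the proof of Theorem 4.2): if `φ` is an admissible characteristic
function which is `C²` on a closed ball of radius `ε₀` with α-Hölder continuous
second derivatives there, then there are `ε ∈ (0, ε₀]` and `C > 0` such that for all
`n ≥ 1` and all `z` with `‖z‖ ≤ √n·ε`,
`|φ(z/√n)ⁿ − G_ν(z)| ≤ C·‖z‖^{2+α}·n^{−α/2}·exp(−‖z‖²/4)`. -/
theorem pointwise_gaussian_approx_low_regularity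
    (m : ℕ) (hm : 1 ≤ m) (α : ℝ) (hα₀ : 0 < α) (hα₁ : α ≤ 1)
    (ν : Fin m → ℝ) (hν : ∀ j, 1 ≤ ν j)
    (φ : EuclideanSpace ℝ (Fin m ⊕ Fin m) → ℂ)
    (hφ : IsAdmissibleCF m ν φ)
    (ε₀ : ℝ) (hε₀ : 0 < ε₀)
    (hreg : ContDiffOn ℝ 2 φ (closedBall 0 ε₀))
    (hHolder : ∃ K : ℝ, ∀ z ∈ closedBall (0 : EuclideanSpace ℝ (Fin m ⊕ Fin m)) ε₀,
      ∀ w ∈ closedBall (0 : EuclideanSpace ℝ (Fin m ⊕ Fin m)) ε₀,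
        ‖iteratedFDerivWithin ℝ 2 φ (closedBall 0 ε₀) z
          - iteratedFDerivWithin ℝ 2 φ (closedBall 0 ε₀) w‖ ≤ K * ‖z - w‖ ^ α) :
    ∃ ε : ℝ, 0 < ε ∧ ε ≤ ε₀ ∧ ∃ C : ℝ, 0 < C ∧ ∀ n : ℕ, 1 ≤ n →
      ∀ z : EuclideanSpace ℝ (Fin m ⊕ Fin m), ‖z‖ ≤ Real.sqrt n * ε →
        ‖φ ((Real.sqrt n)⁻¹ • z) ^ n - (gaussLimit m ν z : ℂ)‖
          ≤ C * ‖z‖ ^ (2 + α) * (n : ℝ) ^ (-(α / 2)) * Real.exp (-‖z‖ ^ 2 / 4) :=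
  pointwise_gaussian_approx_low_regularity_general m α hα₀ hα₁ ν hν φ hφ ε₀ hε₀ hreg hHolder
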